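/- arXiv:0911.3503 — 3 statements merged into one kernel-verified Lean document; each statement's English description precedes it below -/
import Mathlib

section
/- Let A be a commutative noetherian local ring, let B be a finite set of μ monomials in x_1,...,x_n connected to 1, and let z = (z_{α,β})_{α∈∂B,β∈B} be coefficients in A with associated border relations h_α^z = x^α − Σ_{β∈B} z_{α,β} x^β for α ∈ ∂B. Then the quotient A[x_1,...,x_n]/(h_α^z : α ∈ ∂B) is a free A-module having the images of the monomials of B as a basis (i.e., the h_α^z are the border relations of a free quotient algebra of A[x_1,...,x_n] with basis B) if and only if the multiplication operators commute: M_{x_i}^z ∘ M_{x_j}^z = M_{x_j}^z ∘ M_{x_i}^z for all 1 ≤ i < j ≤ n. -/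
open MvPolynomial

noncomputable section

/-- A finite set `B` of monomials (given by their exponents) of `A[x_1, …, x_n]` is
connected to `1` if `1 ∈ B` and every monomial `m ∈ B \ {1}` equals `x_i · m'` for some
`m' ∈ B` and some `i`. -/
def ConnectedToOne {n : ℕ} (B : Finset (Fin n →₀ ℕ)) : Prop :=
  0 ∈ B ∧ ∀ β ∈ B, β ≠ 0 → ∃ β' ∈ B, ∃ i : Fin n, β = β' + Finsupp.single i 1

/-- `B⁺ = B ∪ x_1·B ∪ ⋯ ∪ x_n·B` (on exponents). -/
def borderPlus {n : ℕ} (B : Finset (Fin n →₀ ℕ)) : Finset (Fin n →₀ ℕ) :=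
  B ∪ Finset.univ.biUnion fun i : Fin n => B.image (· + Finsupp.single i 1)

/-- The border `∂B = B⁺ \ B`. -/
def border {n : ℕ} (B : Finset (Fin n →₀ ℕ)) : Finset (Fin n →₀ ℕ) :=
  borderPlus B \ B

/-- The border relation `h_α^z = x^α − Σ_{β ∈ B} z_{α,β} x^β`. -/
def borderRel {n : ℕ} {A : Type*} [CommRing A] (B : Finset (Fin n →₀ ℕ))
    (z : (Fin n →₀ ℕ) → (Fin n →₀ ℕ) → A) (α : Fin n →₀ ℕ) :
    MvPolynomial (Fin n) A :=
  monomial α (1 : A) - ∑ β ∈ B, C (z α β) * monomial β (1 : A)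

/-- The matrix, in the basis `B` of `⟨B⟩`, of the formal multiplication operator
`M_{x_i}^z : ⟨B⟩ → ⟨B⟩`, `M_{x_i}^z(x^β) = N^z(x_i · x^β)`, where `N^z` is the
projection on `⟨B⟩` determined by the border relations: `N^z(x^β) = x^β` for `β ∈ B`
and `N^z(x^α) = Σ_{β ∈ B} z_{α,β} x^β` for `α ∈ ∂B`. -/
def multMatrix {n : ℕ} {A : Type*} [CommRing A] (B : Finset (Fin n →₀ ℕ))
    (z : (Fin n →₀ ℕ) → (Fin n →₀ ℕ) → A) (i : Fin n) :
    Matrix B B A := fun β' β =>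
  if (β : Fin n →₀ ℕ) + Finsupp.single i 1 ∈ B then
    (if (β' : Fin n →₀ ℕ) = (β : Fin n →₀ ℕ) + Finsupp.single i 1 then 1 else 0)
  else z ((β : Fin n →₀ ℕ) + Finsupp.single i 1) β'


/-!
In `A[x] / (h_α^z)`, multiplication by `x_i` sends the class of `x^β` (`β ∈ B`) to the
combination of the classes of `B` read off column `β` of `M_{x_i}^z`, because `x_i x^β` lies
either in `B` or in `∂B`. So when these classes form a basis, the `M_{x_i}^z` are the matrices
of the commuting multiplications by the `x_i`.

Conversely, commuting matrices give an `A`-algebra map `φ : A[x] → Mat_B(A)` with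
`x_i ↦ M_{x_i}^z`. As `B` is connected to `1`, `p ↦ φ(p) e_1` sends `x^β` to `e_β` for `β ∈ B`;
it kills every `h_α^z`, hence the whole ideal, since `φ(qp) e_1 = φ(q) (φ(p) e_1)`. This makes
the classes of `B` linearly independent. They span because their span contains `1` and is
stable under multiplication by each `x_i`.
-/

open scoped Matrix

theorem MvPolynomial.monomial_add_single_one {σ R : Type*} [CommSemiring R] (s : σ →₀ ℕ)
    (i : σ) (a : R) : monomial (s + Finsupp.single i 1) a = X i * monomial s a := by
  rw [add_comm, monomial_single_add, pow_one]

theorem Ideal.Quotient.mk_smul {R S : Type*} [CommSemiring R] [CommRing S] [Algebra R S]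
    (I : Ideal S) (a : R) (p : S) : mk I (a • p) = a • mk I p :=
  map_smul (mkₐ R I) a p

open scoped IsMulCommutative in
theorem MvPolynomial.exists_aeval_eq_of_commute {σ R S : Type*} [CommRing R] [Ring S]
    [Algebra R S] (f : σ → S) (hf : ∀ i j, Commute (f i) (f j)) :
    ∃ φ : MvPolynomial σ R →ₐ[R] S, ∀ i, φ (X i) = f i := by
  have := Algebra.isMulCommutative_adjoin R (s := Set.range f) (by
    rintro _ ⟨i, rfl⟩ _ ⟨j, rfl⟩
    exact hf i j)
  exact ⟨(Algebra.adjoin R (Set.range f)).val.comp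
    (aeval fun i => ⟨f i, Algebra.subset_adjoin ⟨i, rfl⟩⟩), fun i => by simp⟩

namespace ConnectedToOne

variable {n : ℕ} {B : Finset (Fin n →₀ ℕ)}

theorem induction (hB : ConnectedToOne B) {P : B → Prop} (zero : P ⟨0, hB.1⟩)
    (add_single : ∀ (β : B) i (h : (β : Fin n →₀ ℕ) + Finsupp.single i 1 ∈ B), P β → P ⟨_, h⟩)
    (β : B) : P β := by
  obtain ⟨β, hβ⟩ := β
  induction β using WellFoundedLT.induction with
  | _ β ih =>
    by_cases h0 : β = 0
    · exact h0 ▸ zero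
    obtain ⟨β', hβ', i, rfl⟩ := hB.2 β hβ h0
    refine add_single ⟨β', hβ'⟩ i hβ (ih β' ?_ hβ')
    exact lt_add_of_pos_right _ (pos_iff_ne_zero.mpr (Finsupp.single_ne_zero.mpr one_ne_zero))

end ConnectedToOne

namespace BorderBasis

variable {n : ℕ} {A : Type*} [CommRing A] {B : Finset (Fin n →₀ ℕ)}
  {z : (Fin n →₀ ℕ) → (Fin n →₀ ℕ) → A}

theorem add_single_mem_border {β : Fin n →₀ ℕ} (hβ : β ∈ B) (i : Fin n)
    (h : β + Finsupp.single i 1 ∉ B) : β + Finsupp.single i 1 ∈ border B := by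
  simp only [border, borderPlus, Finset.mem_sdiff, Finset.mem_union, Finset.mem_biUnion,
    Finset.mem_image, Finset.mem_univ, true_and]
  exact ⟨Or.inr ⟨i, β, hβ, rfl⟩, h⟩

theorem exists_add_single_of_mem_border {α : Fin n →₀ ℕ} (hα : α ∈ border B) :
    α ∉ B ∧ ∃ β ∈ B, ∃ i, α = β + Finsupp.single i 1 := by
  simp only [border, borderPlus, Finset.mem_sdiff, Finset.mem_union, Finset.mem_biUnion,
    Finset.mem_image, Finset.mem_univ, true_and] at hα
  obtain ⟨h | ⟨i, β, hβ, rfl⟩, hαB⟩ := hα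
  · exact absurd h hαB
  · exact ⟨hαB, β, hβ, i, rfl⟩

theorem multMatrix_apply_of_mem {i : Fin n} {β : B}
    (h : (β : Fin n →₀ ℕ) + Finsupp.single i 1 ∈ B) (β' : B) :
    multMatrix B z i β' β = (Pi.single (⟨_, h⟩ : B) 1 : B → A) β' := by
  simp [multMatrix, h, Pi.single_apply, Subtype.ext_iff]

theorem multMatrix_apply_of_notMem {i : Fin n} {β : B}
    (h : (β : Fin n →₀ ℕ) + Finsupp.single i 1 ∉ B) (β' : B) :
    multMatrix B z i β' β = z ((β : Fin n →₀ ℕ) + Finsupp.single i 1) β' := by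
  simp [multMatrix, h]

variable (B z) in
abbrev borderIdeal : Ideal (MvPolynomial (Fin n) A) :=
  Ideal.span (borderRel B z '' (border B : Set (Fin n →₀ ℕ)))

theorem mk_monomial_of_mem_border {α : Fin n →₀ ℕ} (hα : α ∈ border B) :
    Ideal.Quotient.mk (borderIdeal B z) (monomial α 1) =
      ∑ β ∈ B, z α β • Ideal.Quotient.mk (borderIdeal B z) (monomial β 1) := by
  have hrel : Ideal.Quotient.mk (borderIdeal B z) (borderRel B z α) = 0 :=
    Ideal.Quotient.eq_zero_iff_mem.mpr (Ideal.subset_span ⟨α, hα, rfl⟩)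
  rw [borderRel, map_sub, sub_eq_zero, map_sum] at hrel
  refine hrel.trans (Finset.sum_congr rfl fun β _ => ?_)
  rw [C_mul', Ideal.Quotient.mk_smul]

theorem mk_X_mul_monomial (i : Fin n) (β : B) :
    Ideal.Quotient.mk (borderIdeal B z) (X i * monomial β 1) =
      ∑ β', multMatrix B z i β' β • Ideal.Quotient.mk (borderIdeal B z) (monomial β' 1) := by
  rw [← monomial_add_single_one]
  by_cases h : (β : Fin n →₀ ℕ) + Finsupp.single i 1 ∈ B
  · simp [multMatrix_apply_of_mem h, Pi.single_apply]
  · simp [multMatrix_apply_of_notMem h, mk_monomial_of_mem_border (add_single_mem_border β.2 i h),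
      ← Finset.sum_coe_sort B]

theorem toMatrix_mulLeft_mk_X {b : Module.Basis B A (MvPolynomial (Fin n) A ⧸ borderIdeal B z)}
    (hb : ∀ β, b β = Ideal.Quotient.mk (borderIdeal B z) (monomial (β : Fin n →₀ ℕ) 1))
    (i : Fin n) :
    LinearMap.toMatrix b b (LinearMap.mulLeft A (Ideal.Quotient.mk (borderIdeal B z) (X i))) =
      multMatrix B z i := by
  rw [← LinearMap.toMatrix_toLin b b (multMatrix B z i)]
  congr 1
  refine b.ext fun β => ?_
  rw [Matrix.toLin_self, LinearMap.mulLeft_apply, hb, ← map_mul, mk_X_mul_monomial]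
  simp only [hb]

theorem commute_multMatrix_of_basis
    {b : Module.Basis B A (MvPolynomial (Fin n) A ⧸ borderIdeal B z)}
    (hb : ∀ β, b β = Ideal.Quotient.mk (borderIdeal B z) (monomial (β : Fin n →₀ ℕ) 1))
    (i j : Fin n) : Commute (multMatrix B z i) (multMatrix B z j) := by
  rw [← toMatrix_mulLeft_mk_X hb, ← toMatrix_mulLeft_mk_X hb, Commute, SemiconjBy,
    ← LinearMap.toMatrix_mul, ← LinearMap.toMatrix_mul, Module.End.mul_eq_comp,
    Module.End.mul_eq_comp, ← LinearMap.mulLeft_mul, ← LinearMap.mulLeft_mul, mul_comm]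

theorem map_monomial_mulVec_single_zero (hB : ConnectedToOne B)
    {φ : MvPolynomial (Fin n) A →ₐ[A] Matrix B B A} (hφ : ∀ i, φ (X i) = multMatrix B z i)
    (β : B) : φ (monomial β 1) *ᵥ Pi.single ⟨0, hB.1⟩ 1 = Pi.single β 1 := by
  induction β using hB.induction with
  | zero => rw [monomial_zero', C_1, map_one, Matrix.one_mulVec]
  | add_single β i h ih =>
    ext β'
    rw [monomial_add_single_one, map_mul, ← Matrix.mulVec_mulVec, ih, hφ,
      Matrix.mulVec_single_one, Matrix.col_apply, multMatrix_apply_of_mem h]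

theorem map_borderRel_mulVec_single_zero (hB : ConnectedToOne B)
    {φ : MvPolynomial (Fin n) A →ₐ[A] Matrix B B A} (hφ : ∀ i, φ (X i) = multMatrix B z i)
    {α : Fin n →₀ ℕ} (hα : α ∈ border B) :
    φ (borderRel B z α) *ᵥ Pi.single ⟨0, hB.1⟩ 1 = 0 := by
  obtain ⟨hαB, β, hβ, i, rfl⟩ := exists_add_single_of_mem_border hα
  have hcol : φ (monomial (β + Finsupp.single i 1) 1) *ᵥ Pi.single ⟨0, hB.1⟩ 1 =
      fun β' : B => z (β + Finsupp.single i 1) β' := by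
    ext β'
    rw [monomial_add_single_one, map_mul, ← Matrix.mulVec_mulVec,
      map_monomial_mulVec_single_zero hB hφ ⟨β, hβ⟩, hφ, Matrix.mulVec_single_one,
      Matrix.col_apply, multMatrix_apply_of_notMem hαB]
  rw [borderRel, map_sub, Matrix.sub_mulVec, hcol, sub_eq_zero, map_sum, Matrix.sum_mulVec,
    ← Finset.sum_coe_sort B]
  simp_rw [C_mul', map_smul, Matrix.smul_mulVec, map_monomial_mulVec_single_zero hB hφ]
  ext β'
  simp [Finset.sum_apply, Pi.single_apply]

theorem map_mulVec_single_zero_eq_zero_of_mem_borderIdeal (hB : ConnectedToOne B)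
    {φ : MvPolynomial (Fin n) A →ₐ[A] Matrix B B A} (hφ : ∀ i, φ (X i) = multMatrix B z i)
    {p : MvPolynomial (Fin n) A} (hp : p ∈ borderIdeal B z) :
    φ p *ᵥ Pi.single ⟨0, hB.1⟩ 1 = 0 := by
  induction hp using Submodule.span_induction with
  | mem _ h =>
    obtain ⟨α, hα, rfl⟩ := h
    exact map_borderRel_mulVec_single_zero hB hφ hα
  | zero => rw [map_zero, Matrix.zero_mulVec]
  | add p q _ _ hp hq => rw [map_add, Matrix.add_mulVec, hp, hq, add_zero]
  | smul q p _ hp => rw [smul_eq_mul, map_mul, ← Matrix.mulVec_mulVec, hp, Matrix.mulVec_zero]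

theorem linearIndependent_mk_monomial (hB : ConnectedToOne B)
    (hcomm : ∀ i j, Commute (multMatrix B z i) (multMatrix B z j)) :
    LinearIndependent A fun β : B =>
      Ideal.Quotient.mk (borderIdeal B z) (monomial (β : Fin n →₀ ℕ) 1) := by
  obtain ⟨φ, hφ⟩ := exists_aeval_eq_of_commute (R := A) _ hcomm
  rw [Fintype.linearIndependent_iff]
  intro g hg
  have hmem : ∑ β : B, g β • monomial (β : Fin n →₀ ℕ) 1 ∈ borderIdeal B z := by
    simp_rw [← Ideal.Quotient.eq_zero_iff_mem, map_sum, Ideal.Quotient.mk_smul, hg]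
  have hg0 := map_mulVec_single_zero_eq_zero_of_mem_borderIdeal hB hφ hmem
  simp_rw [map_sum, Matrix.sum_mulVec, map_smul, Matrix.smul_mulVec,
    map_monomial_mulVec_single_zero hB hφ, ← Pi.single_smul', smul_eq_mul, mul_one,
    Finset.univ_sum_single] at hg0
  exact congrFun hg0

theorem span_mk_monomial_eq_top (hB : ConnectedToOne B) :
    Submodule.span A (Set.range fun β : B =>
      Ideal.Quotient.mk (borderIdeal B z) (monomial (β : Fin n →₀ ℕ) 1)) = ⊤ := by
  set S := Submodule.span A (Set.range fun β : B =>
    Ideal.Quotient.mk (borderIdeal B z) (monomial (β : Fin n →₀ ℕ) 1))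
  have hX : ∀ i, S ≤ S.comap (LinearMap.mulLeft A (Ideal.Quotient.mk (borderIdeal B z) (X i))) := by
    refine fun i => Submodule.span_le.mpr ?_
    rintro _ ⟨β, rfl⟩
    rw [SetLike.mem_coe, Submodule.mem_comap, LinearMap.mulLeft_apply, ← map_mul,
      mk_X_mul_monomial]
    exact Submodule.sum_mem _ fun β' _ => Submodule.smul_mem _ _ (Submodule.subset_span ⟨β', rfl⟩)
  refine Submodule.eq_top_iff'.mpr fun q => ?_
  obtain ⟨p, rfl⟩ := Ideal.Quotient.mk_surjective q
  induction p using MvPolynomial.induction_on with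
  | C a =>
    rw [← monomial_zero', ← mul_one a, ← smul_eq_mul, ← smul_monomial, Ideal.Quotient.mk_smul]
    exact S.smul_mem a (Submodule.subset_span ⟨⟨0, hB.1⟩, rfl⟩)
  | add p q hp hq => rw [map_add]; exact S.add_mem hp hq
  | mul_X p i hp => rw [mul_comm, map_mul]; exact hX i hp

end BorderBasis

theorem border_basis_iff_commute_general {n : ℕ} {A : Type*} [CommRing A]
    (B : Finset (Fin n →₀ ℕ)) (hconn : ConnectedToOne B)
    (z : (Fin n →₀ ℕ) → (Fin n →₀ ℕ) → A) :
    (∃ b : Module.Basis B A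
        (MvPolynomial (Fin n) A ⧸ Ideal.span (borderRel B z '' (border B : Set (Fin n →₀ ℕ)))),
        ∀ β : B, b β =
          Ideal.Quotient.mk (Ideal.span (borderRel B z '' (border B : Set (Fin n →₀ ℕ))))
            (monomial (β : Fin n →₀ ℕ) (1 : A))) ↔
      ∀ i j : Fin n, i < j →
        multMatrix B z i * multMatrix B z j = multMatrix B z j * multMatrix B z i := by
  constructor
  · rintro ⟨b, hb⟩ i j -
    exact BorderBasis.commute_multMatrix_of_basis hb i j
  · intro hlt
    have hcomm : ∀ i j, Commute (multMatrix B z i) (multMatrix B z j) := by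
      intro i j
      rcases lt_trichotomy i j with h | rfl | h
      · exact hlt i j h
      · exact Commute.refl _
      · exact (hlt j i h).symm
    exact ⟨.mk (BorderBasis.linearIndependent_mk_monomial hconn hcomm)
      (BorderBasis.span_mk_monomial_eq_top hconn).ge, fun β => Module.Basis.mk_apply _ _ β⟩

/-- Theorem `thm:2.1`, after `BMnf99`.
Let `A` be a commutative noetherian local ring, `B` a set of `μ` monomials of
`A[x_1, …, x_n]` connected to `1`, and `z = (z_{α,β})` coefficients in `A` with border
relations `h_α^z = x^α − Σ_{β∈B} z_{α,β} x^β` (`α ∈ ∂B`).  Then the quotient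
`A[x_1, …, x_n]/(h_α^z : α ∈ ∂B)` is a free `A`-module having the images of the
monomials of `B` as a basis if and only if the multiplication operators commute:
`M_{x_i}^z ∘ M_{x_j}^z = M_{x_j}^z ∘ M_{x_i}^z` for all `1 ≤ i < j ≤ n`. -/
theorem border_basis_iff_commute {n : ℕ} {A : Type*} [CommRing A]
    [IsNoetherianRing A] [IsLocalRing A]
    (μ : ℕ) (B : Finset (Fin n →₀ ℕ)) (hcard : B.card = μ) (hconn : ConnectedToOne B)
    (z : (Fin n →₀ ℕ) → (Fin n →₀ ℕ) → A) :
    (∃ b : Module.Basis B A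
        (MvPolynomial (Fin n) A ⧸ Ideal.span (borderRel B z '' (border B : Set (Fin n →₀ ℕ)))),
        ∀ β : B, b β =
          Ideal.Quotient.mk (Ideal.span (borderRel B z '' (border B : Set (Fin n →₀ ℕ))))
            (monomial (β : Fin n →₀ ℕ) (1 : A))) ↔
      ∀ i j : Fin n, i < j →
        multMatrix B z i * multMatrix B z j = multMatrix B z j * multMatrix B z i :=
  border_basis_iff_commute_general B hconn z

end
end

section
/- Let A be a noetherian local K-algebra, T = A[x_0,...,x_n], and let μ ≤ d be positive integers. Let I_d ⊆ T_d and I_{d+1} ⊆ T_{d+1} be A-submodules with T_1·I_d ⊆ I_{d+1}, such that T_d/I_d and T_{d+1}/I_{d+1} are free A-modules of rank μ. Then T_1·I_d = I_{d+1}. -/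
/-!
Reduce modulo the maximal ideal of `A`. Over the residue field, the image `V` of `I_d` has
codimension at most `μ ≤ d` among the forms of degree `d`, and Macaulay's bound gives the same
for `T_1 V` in degree `d + 1`. That bound is proved by duality: for the pairing
`⟨f, g⟩ = ∑ₘ fₘ gₘ` multiplication by `x i` is adjoint to contraction by `x i`, so the
contractions of `(T_1 V)^⊥` lie in `V^⊥`, while the contractions of a space `W` of forms of
degree `e` span a space of dimension at least `min (dim W) e`. By Nakayama, `T_{d+1}` is then
spanned by `T_1 I_d` and `μ` further forms, so `T_{d+1} / T_1 I_d` is a quotient of `A^μ`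
that surjects onto `T_{d+1} / I_{d+1} ≅ A^μ`; a surjective endomorphism of `A^μ` is injective,
whence `T_1 I_d = I_{d+1}`.
-/

open MvPolynomial

noncomputable section

/-- `T_d`: the `A`-submodule of homogeneous polynomials of degree `d`
in `T = A[x_0, …, x_n]`. -/
def homogComp (n : ℕ) (A : Type*) [CommRing A] (d : ℕ) :
    Submodule A (MvPolynomial (Fin (n + 1)) A) :=
  homogeneousSubmodule (Fin (n + 1)) A d

/-- The quotient `T_d / (N ∩ T_d)` for an `A`-submodule `N` of `T = A[x_0, …, x_n]`.
When `N ≤ T_d` this is the quotient of `T_d` by `N`. -/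
def quotComp {n : ℕ} {A : Type*} [CommRing A]
    (N : Submodule A (MvPolynomial (Fin (n + 1)) A)) (d : ℕ) :=
  homogComp n A d ⧸ N.comap (homogComp n A d).subtype

instance {n : ℕ} {A : Type*} [CommRing A]
    (N : Submodule A (MvPolynomial (Fin (n + 1)) A)) (d : ℕ) :
    AddCommGroup (quotComp N d) := by unfold quotComp; infer_instance

instance {n : ℕ} {A : Type*} [CommRing A]
    (N : Submodule A (MvPolynomial (Fin (n + 1)) A)) (d : ℕ) :
    Module A (quotComp N d) := by unfold quotComp; infer_instance

/-- `T_1 · N`: the `A`-submodule of `T` spanned by the products `ℓ · f` with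
`ℓ ∈ T_1` a linear form and `f ∈ N`. -/
def mulT1 {n : ℕ} {A : Type*} [CommRing A]
    (N : Submodule A (MvPolynomial (Fin (n + 1)) A)) :
    Submodule A (MvPolynomial (Fin (n + 1)) A) :=
  Submodule.span A {p | ∃ ℓ ∈ homogComp n A 1, ∃ f ∈ N, p = ℓ * f}

open Module Submodule Set

section Spanning

variable {R M ι : Type*} [CommRing R] [AddCommGroup M] [Module R M]

theorem Submodule.exists_le_sup_span_of_basis {P N : Submodule R M}
    (b : Basis ι R (P ⧸ N.comap P.subtype)) :
    ∃ r : ι → M, (∀ j, r j ∈ P) ∧ P ≤ N ⊔ span R (range r) := by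
  choose r hr using fun j => Quotient.mk_surjective _ (b j)
  have htop : N.comap P.subtype ⊔ span R (range r) = ⊤ := by
    rw [← map_mkQ_eq_top, map_span, ← range_comp, ← b.span_eq]
    congr 2
    exact funext hr
  refine ⟨fun j => r j, fun j => (r j).2, fun x hx => ?_⟩
  have hmem := mem_map_of_mem (f := P.subtype) (htop ▸ mem_top : (⟨x, hx⟩ : P) ∈ _)
  rw [map_sup, map_comap_subtype, map_span, ← range_comp] at hmem
  exact (sup_le_sup_right inf_le_right _ : P ⊓ N ⊔ _ ≤ N ⊔ _) hmem

/-- `R^ι ↠ M ⧸ N₁ ↠ M ⧸ N₂ ≅ R^ι` is a surjective endomorphism of `R^ι`, hence injective. -/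
theorem Submodule.eq_of_sup_span_eq_top_of_basis [Finite ι] {N₁ N₂ : Submodule R M}
    (h12 : N₁ ≤ N₂) (b : Basis ι R (M ⧸ N₂)) (g : ι → M) (hg : N₁ ⊔ span R (range g) = ⊤) :
    N₁ = N₂ := by
  have : Module.Finite R (M ⧸ N₂) := Module.Finite.of_basis b
  set f₁ := N₁.mkQ ∘ₗ Finsupp.linearCombination R g
  have hf₁ : Function.Surjective f₁ := by
    rw [← LinearMap.range_eq_top, LinearMap.range_comp, Finsupp.range_linearCombination,
      map_mkQ_eq_top, hg]
  have hinj := OrzechProperty.injective_of_surjective_of_injective b.repr.symm.toLinearMap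
    (factor h12 ∘ₗ f₁) b.repr.symm.injective ((factor_surjective h12).comp hf₁)
  refine le_antisymm h12 fun x hx => ?_
  obtain ⟨c, hc⟩ := hf₁ (N₁.mkQ x)
  have hc0 : c = 0 := hinj (by
    rw [map_zero, LinearMap.comp_apply, hc, factor_mk, mkQ_apply, Quotient.mk_eq_zero]
    exact hx)
  rw [← Quotient.mk_eq_zero, ← mkQ_apply, ← hc, hc0, map_zero]

theorem Submodule.eq_of_le_sup_span_of_basis [Finite ι] {P N₁ N₂ : Submodule R M}
    (h12 : N₁ ≤ N₂) (h2P : N₂ ≤ P) (b : Basis ι R (P ⧸ N₂.comap P.subtype)) (g : ι → M)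
    (hgP : ∀ j, g j ∈ P) (hP : P ≤ N₁ ⊔ span R (range g)) : N₁ = N₂ := by
  have h1P : N₁ ≤ P := h12.trans h2P
  have hcomap := eq_of_sup_span_eq_top_of_basis (comap_mono h12) b (fun j => ⟨g j, hgP j⟩) <|
    map_injective_of_injective P.injective_subtype <| by
      rw [map_sup, map_comap_subtype, inf_eq_right.mpr h1P, map_span, ← range_comp, map_top,
        range_subtype]
      exact le_antisymm (sup_le h1P (span_le.mpr (range_subset_iff.mpr hgP))) hP
  refine le_antisymm h12 fun x hx => ?_
  exact (hcomap ▸ hx : (⟨x, h2P hx⟩ : P) ∈ N₁.comap P.subtype)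

end Spanning

section VectorSpace

variable {K V : Type*} [Field K] [AddCommGroup V] [Module K V]

theorem Submodule.finrank_le_finrank_add_card {ι : Type*} [Fintype ι] {E W : Submodule K V}
    [FiniteDimensional K W] (g : ι → V) (h : E ≤ W ⊔ span K (range g)) :
    finrank K E ≤ finrank K W + Fintype.card ι :=
  have : FiniteDimensional K (span K (range g)) :=
    FiniteDimensional.span_of_finite K (finite_range g)
  (finrank_mono h).trans <| (finrank_add_le_finrank_add_finrank _ _).trans <|
    Nat.add_le_add_left (finrank_range_le_card g) _

theorem Submodule.exists_le_sup_span_of_finrank_le {μ : ℕ} {E W : Submodule K V}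
    [FiniteDimensional K E] (hWE : W ≤ E) (h : finrank K E ≤ finrank K W + μ) :
    ∃ g : Fin μ → V, (∀ j, g j ∈ E) ∧ E ≤ W ⊔ span K (range g) := by
  have hQ : finrank K (E ⧸ W.comap E.subtype) ≤ μ := by
    have := finrank_quotient_add_finrank (W.comap E.subtype)
    rw [(comapSubtypeEquivOfLe hWE).finrank_eq] at this
    omega
  obtain ⟨r, hrE, hr⟩ := exists_le_sup_span_of_basis (Module.finBasis K (E ⧸ W.comap E.subtype))
  refine ⟨fun j => if h : (j : ℕ) < finrank K (E ⧸ W.comap E.subtype) then r ⟨j, h⟩ else 0,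
    fun j => ?_, ?_⟩
  · dsimp only
    split_ifs
    exacts [hrE _, E.zero_mem]
  · refine hr.trans (sup_le_sup_left (span_mono (range_subset_iff.mpr fun j => ?_)) _)
    exact ⟨Fin.castLE hQ j, by simp⟩

theorem Submodule.finrank_map_add_finrank_inf_ker {V₂ : Type*} [AddCommGroup V₂] [Module K V₂]
    (f : V →ₗ[K] V₂) (W : Submodule K V) [FiniteDimensional K W] :
    finrank K (W.map f) + finrank K ↥(W ⊓ LinearMap.ker f) = finrank K W := by
  rw [← LinearMap.finrank_range_add_finrank_ker (f.domRestrict W), LinearMap.range_domRestrict,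
    LinearMap.ker_domRestrict, ← Submodule.finrank_map_subtype_eq, Submodule.map_comap_subtype]

end VectorSpace

theorem max_sum_le_sum_of_max_le {w c : ℕ → ℕ} {e : ℕ}
    (h : ∀ a < e, max (w (a + 1)) (min (w a) (e - a)) ≤ c a) :
    max (∑ a ∈ Finset.range e, w (a + 1)) (min (∑ a ∈ Finset.range (e + 1), w a) e) ≤
      ∑ a ∈ Finset.range e, c a := by
  induction e generalizing w c with
  | zero => simp
  | succ e ih =>
    have ih' := ih (w := fun a => w (a + 1)) (c := fun a => c (a + 1)) fun a ha => by
      simpa using h (a + 1) (by omega)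
    have h0 := h 0 (by omega)
    simp only [Finset.sum_range_succ' _ (e + 1), Finset.sum_range_succ' _ e] at ih' ⊢
    omega

instance IsLocalRing.ringHomSurjective_residue {A : Type*} [CommRing A] [IsLocalRing A] :
    RingHomSurjective (IsLocalRing.residue A) :=
  ⟨IsLocalRing.residue_surjective⟩

namespace MvPolynomial

instance {R σ : Type*} [CommSemiring R] [Finite σ] (e : ℕ) :
    Module.Finite R (homogeneousSubmodule σ R e) :=
  Module.Finite.iff_fg.mpr (homogeneousSubmodule_fg σ R e)

section Contract

variable {R σ : Type*} [CommSemiring R]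

theorem mem_homogeneousSubmodule_iff_degree_eq {p : MvPolynomial σ R} {e : ℕ} :
    p ∈ homogeneousSubmodule σ R e ↔ ∀ m, coeff m p ≠ 0 → m.degree = e := by
  rw [homogeneousSubmodule_eq_finsupp_supported, AddMonoidAlgebra.mem_supported]
  exact ⟨fun h m hm => h (Finsupp.mem_support_iff.mpr hm),
    fun h m hm => h m (Finsupp.mem_support_iff.mp hm)⟩

/-- Contraction by `x ^ u`: it sends `x ^ m` to `x ^ (m - u)` if `u ≤ m`, and to `0` otherwise. -/
def contract (u : σ →₀ ℕ) : MvPolynomial σ R →ₗ[R] MvPolynomial σ R where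
  toFun p := AddMonoidAlgebra.comapDomain (u + ·) (add_right_injective u) p
  map_add' p q := AddMonoidAlgebra.comapDomain_add _ _ p q
  map_smul' c p := by ext m; exact coeff_smul (u + m) c p

@[simp]
theorem coeff_contract (u m : σ →₀ ℕ) (p : MvPolynomial σ R) :
    coeff m (contract u p) = coeff (u + m) p :=
  rfl

theorem contract_zero : (contract 0 : MvPolynomial σ R →ₗ[R] MvPolynomial σ R) = LinearMap.id := by
  ext; simp

theorem contract_contract (u v : σ →₀ ℕ) (p : MvPolynomial σ R) :
    contract u (contract v p) = contract (v + u) p := by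
  ext m; simp [add_assoc]

theorem contract_comm (u v : σ →₀ ℕ) (p : MvPolynomial σ R) :
    contract u (contract v p) = contract v (contract u p) := by
  rw [contract_contract, contract_contract, add_comm]

theorem ker_contract_le_ker_contract_add (u v : σ →₀ ℕ) :
    LinearMap.ker (contract u : MvPolynomial σ R →ₗ[R] _) ≤ LinearMap.ker (contract (u + v)) := by
  intro p hp
  rw [LinearMap.mem_ker] at hp ⊢
  rw [← contract_contract, hp, map_zero]

theorem contract_mem_homogeneousSubmodule {u : σ →₀ ℕ} {e : ℕ} {p : MvPolynomial σ R}
    (hp : p ∈ homogeneousSubmodule σ R e) :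
    contract u p ∈ homogeneousSubmodule σ R (e - u.degree) := by
  rw [mem_homogeneousSubmodule_iff_degree_eq] at hp ⊢
  intro m hm
  have := hp _ hm
  rw [map_add] at this
  omega

theorem contract_eq_zero_of_lt_degree {u : σ →₀ ℕ} {e : ℕ} {p : MvPolynomial σ R}
    (hp : p ∈ homogeneousSubmodule σ R e) (hu : e < u.degree) : contract u p = 0 := by
  ext m
  rw [coeff_contract, coeff_zero]
  by_contra hm
  have := mem_homogeneousSubmodule_iff_degree_eq.mp hp _ hm
  rw [map_add] at this
  omega

theorem eq_zero_of_contract_single_eq_zero {e : ℕ} (he : e ≠ 0) {p : MvPolynomial σ R}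
    (hp : p ∈ homogeneousSubmodule σ R e) (h : ∀ i, contract (Finsupp.single i 1) p = 0) :
    p = 0 := by
  ext m
  by_contra hm
  obtain ⟨i, hi⟩ : ∃ i, m i ≠ 0 := by
    by_contra! h0
    rw [show m = 0 from Finsupp.ext h0] at hm
    exact he ((mem_homogeneousSubmodule_iff_degree_eq.mp hp 0 hm).symm.trans (map_zero _))
  have hle : Finsupp.single i 1 ≤ m := Finsupp.single_le_iff.mpr (Nat.one_le_iff_ne_zero.mpr hi)
  apply hm
  rw [← add_tsub_cancel_of_le hle, ← coeff_contract, h, coeff_zero, coeff_zero]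

end Contract

section Filtration

variable {k σ : Type*} [Field k]

/-- The `a`-th graded piece of `W` for the filtration by the degree in `x i`: the coefficients of
`x i ^ a` in the elements of `W` of `x i`-degree `≤ a`, i.e. of those killed by
`contract (x i ^ (a + 1))`. -/
def gradedPiece (i : σ) (a : ℕ) (W : Submodule k (MvPolynomial σ k)) :
    Submodule k (MvPolynomial σ k) :=
  (W ⊓ LinearMap.ker (contract (Finsupp.single i (a + 1)))).map (contract (Finsupp.single i a))

variable {i : σ} {a : ℕ} {W W' : Submodule k (MvPolynomial σ k)}

instance [FiniteDimensional k W] : FiniteDimensional k (gradedPiece i a W) := by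
  unfold gradedPiece; infer_instance

theorem gradedPiece_mono (h : W ≤ W') : gradedPiece i a W ≤ gradedPiece i a W' :=
  Submodule.map_mono (inf_le_inf_right _ h)

theorem gradedPiece_le_homogeneousSubmodule {e : ℕ} (hW : W ≤ homogeneousSubmodule σ k e) :
    gradedPiece i a W ≤ homogeneousSubmodule σ k (e - a) := by
  rintro _ ⟨p, ⟨hp, -⟩, rfl⟩
  simpa using contract_mem_homogeneousSubmodule (u := Finsupp.single i a) (hW hp)

theorem map_contract_gradedPiece_le (u : σ →₀ ℕ) :
    (gradedPiece i a W).map (contract u) ≤ gradedPiece i a (W.map (contract u)) := by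
  rintro _ ⟨_, ⟨p, ⟨hpW, hp⟩, rfl⟩, rfl⟩
  refine ⟨contract u p, ⟨⟨p, hpW, rfl⟩, ?_⟩, contract_comm _ _ _⟩
  exact LinearMap.mem_ker.mpr (by rw [contract_comm, LinearMap.mem_ker.mp hp, map_zero])

theorem gradedPiece_le_ker_of_le_ker {u : σ →₀ ℕ} (h : W ≤ LinearMap.ker (contract u)) :
    gradedPiece i a W ≤ LinearMap.ker (contract u) := by
  intro x hx
  have hx' := map_contract_gradedPiece_le (i := i) (a := a) (W := W) u ⟨x, hx, rfl⟩
  rwa [LinearMap.le_ker_iff_map.mp h, gradedPiece, bot_inf_eq, Submodule.map_bot,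
    Submodule.mem_bot, ← LinearMap.mem_ker] at hx'

theorem gradedPiece_le_ker_contract_single :
    gradedPiece i a W ≤ LinearMap.ker (contract (Finsupp.single i 1)) := by
  rintro _ ⟨p, ⟨-, hp⟩, rfl⟩
  rwa [LinearMap.mem_ker, contract_contract, ← Finsupp.single_add, ← LinearMap.mem_ker]

theorem gradedPiece_succ_le_gradedPiece_map :
    gradedPiece i (a + 1) W ≤ gradedPiece i a (W.map (contract (Finsupp.single i 1))) := by
  rintro _ ⟨p, ⟨hpW, hp⟩, rfl⟩
  refine ⟨contract (Finsupp.single i 1) p, ⟨⟨p, hpW, rfl⟩, ?_⟩, ?_⟩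
  · exact LinearMap.mem_ker.mpr (by
      rw [contract_contract, ← Finsupp.single_add, add_comm]; exact LinearMap.mem_ker.mp hp)
  · rw [contract_contract, ← Finsupp.single_add, add_comm]

theorem finrank_inf_ker_eq_sum_gradedPiece [FiniteDimensional k W] (i : σ) (b : ℕ) :
    finrank k ↥(W ⊓ LinearMap.ker (contract (Finsupp.single i b))) =
      ∑ a ∈ Finset.range b, finrank k (gradedPiece i a W) := by
  induction b with
  | zero => simp [contract_zero]
  | succ b ih =>
    have hker : LinearMap.ker (contract (Finsupp.single i b)) ≤
        LinearMap.ker (contract (R := k) (Finsupp.single i (b + 1))) := by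
      rw [Finsupp.single_add]
      exact ker_contract_le_ker_contract_add _ _
    rw [Finset.sum_range_succ, ← ih, ← Submodule.finrank_map_add_finrank_inf_ker
      (contract (Finsupp.single i b)), inf_assoc, inf_eq_right.mpr hker, add_comm]
    rfl

theorem finrank_eq_sum_gradedPiece [FiniteDimensional k W] (i : σ) {e : ℕ}
    (hW : W ≤ homogeneousSubmodule σ k e) :
    finrank k W = ∑ a ∈ Finset.range (e + 1), finrank k (gradedPiece i a W) := by
  have hker : W ≤ LinearMap.ker (contract (Finsupp.single i (e + 1))) := fun p hp =>
    contract_eq_zero_of_lt_degree (hW hp) (by simp)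
  rw [← finrank_inf_ker_eq_sum_gradedPiece, inf_eq_left.mpr hker]

end Filtration

section FirstContractions

variable {k σ : Type*} [Field k]

def firstContractions (J : Finset σ) (W : Submodule k (MvPolynomial σ k)) :
    Submodule k (MvPolynomial σ k) :=
  J.sup fun i => W.map (contract (Finsupp.single i 1))

theorem firstContractions_le_homogeneousSubmodule {J : Finset σ} {e : ℕ}
    {W : Submodule k (MvPolynomial σ k)} (hW : W ≤ homogeneousSubmodule σ k e) :
    firstContractions J W ≤ homogeneousSubmodule σ k (e - 1) :=
  Finset.sup_le fun i _ => by
    rintro _ ⟨p, hp, rfl⟩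
    simpa using contract_mem_homogeneousSubmodule (u := Finsupp.single i 1) (hW hp)

theorem firstContractions_gradedPiece_le (J : Finset σ) (i : σ) (a : ℕ)
    (W : Submodule k (MvPolynomial σ k)) :
    firstContractions J (gradedPiece i a W) ≤ gradedPiece i a (firstContractions J W) :=
  Finset.sup_le fun _ hj =>
    (map_contract_gradedPiece_le _).trans (gradedPiece_mono (Finset.le_sup (f := fun j =>
      W.map (contract (Finsupp.single j 1))) hj))

/-- Induction on `J`, filtering by the degree in some `x i₀` with `i₀ ∈ J`: the `a`-th graded piece
of `∂W` contains both the contraction by `x i₀` of the `(a + 1)`-st graded piece of `W` and the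
contractions of the `a`-th one by the other variables; `max_sum_le_sum_of_max_le` adds these
bounds up. -/
theorem min_finrank_le_finrank_firstContractions (J : Finset σ) {e : ℕ}
    {W : Submodule k (MvPolynomial σ k)} [FiniteDimensional k W]
    (hW : W ≤ homogeneousSubmodule σ k e)
    (hJ : ∀ i ∉ J, W ≤ LinearMap.ker (contract (Finsupp.single i 1))) :
    min (finrank k W) e ≤ finrank k (firstContractions J W) := by
  classical
  induction J using Finset.induction_on generalizing e W with
  | empty =>
    rcases eq_or_ne e 0 with rfl | he
    · simp
    have hbot : W = ⊥ := (Submodule.eq_bot_iff W).mpr fun p hp =>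
      eq_zero_of_contract_single_eq_zero he (hW hp) fun i => hJ i (Finset.notMem_empty i) hp
    subst hbot
    simp
  | insert i₀ J hi₀ ih =>
    obtain _ | e := e
    · simp
    set C := firstContractions (insert i₀ J) W
    have hC : C ≤ homogeneousSubmodule σ k e := firstContractions_le_homogeneousSubmodule hW
    have hC₀ : W.map (contract (Finsupp.single i₀ 1)) ≤ C := Finset.le_sup (f := fun j =>
      W.map (contract (Finsupp.single j 1))) (Finset.mem_insert_self i₀ J)
    have hCJ : firstContractions J W ≤ C := Finset.sup_mono (Finset.subset_insert i₀ J)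
    have : FiniteDimensional k C := by unfold C firstContractions; infer_instance
    have key : ∀ a < e + 1, max (finrank k (gradedPiece i₀ (a + 1) W))
        (min (finrank k (gradedPiece i₀ a W)) (e + 1 - a)) ≤ finrank k (gradedPiece i₀ a C) := by
      intro a _
      refine max_le (Submodule.finrank_mono (gradedPiece_succ_le_gradedPiece_map.trans
        (gradedPiece_mono hC₀))) ((ih (gradedPiece_le_homogeneousSubmodule hW) ?_).trans
        (Submodule.finrank_mono ((firstContractions_gradedPiece_le J i₀ a W).trans
        (gradedPiece_mono hCJ))))
      intro i hi
      rcases eq_or_ne i i₀ with rfl | hne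
      · exact gradedPiece_le_ker_contract_single
      · exact gradedPiece_le_ker_of_le_ker (hJ i (by simp [hne, hi]))
    rw [finrank_eq_sum_gradedPiece i₀ hW, finrank_eq_sum_gradedPiece i₀ hC]
    exact (le_max_right _ _).trans (max_sum_le_sum_of_max_le key)

end FirstContractions

section Duality

variable {k σ : Type*} [Field k]

/-- `⟨f, g⟩ = ∑ₘ fₘ gₘ`. -/
def pairing : LinearMap.BilinForm k (MvPolynomial σ k) :=
  (basisMonomials σ k).constr k fun m => lcoeff k m

theorem pairing_monomial (u : σ →₀ ℕ) (c : k) (g : MvPolynomial σ k) :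
    pairing (monomial u c) g = c * coeff u g := by
  have h : pairing (monomial u (1 : k)) = lcoeff k u := by
    rw [show monomial u (1 : k) = basisMonomials σ k u by simp [coe_basisMonomials]]
    exact (basisMonomials σ k).constr_basis k _ u
  rw [← mul_one c, ← smul_eq_mul, ← smul_monomial, map_smul, h]
  simp

theorem pairing_X_mul (i : σ) (f g : MvPolynomial σ k) :
    pairing (X i * f) g = pairing f (contract (Finsupp.single i 1) g) := by
  induction f using induction_on' with
  | monomial u c =>
    rw [X, monomial_mul, one_mul, pairing_monomial, pairing_monomial, coeff_contract]
  | add p q hp hq =>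
    rw [mul_add, map_add, map_add, LinearMap.add_apply, LinearMap.add_apply, hp, hq]

def perp (e : ℕ) (V : Submodule k (MvPolynomial σ k)) : Submodule k (MvPolynomial σ k) :=
  homogeneousSubmodule σ k e ⊓ pairing.orthogonal V

theorem perp_le_homogeneousSubmodule (e : ℕ) (V : Submodule k (MvPolynomial σ k)) :
    perp e V ≤ homogeneousSubmodule σ k e :=
  inf_le_left

theorem pairing_restrict_nondegenerate [Finite σ] (e : ℕ) :
    (pairing.restrict (homogeneousSubmodule σ k e)).Nondegenerate := by
  refine .ofSeparatingRight fun g hg => Subtype.ext (MvPolynomial.ext _ _ fun u => ?_)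
  by_contra hu
  have hdeg := mem_homogeneousSubmodule_iff_degree_eq.mp g.2 u hu
  have := hg ⟨monomial u 1, (mem_homogeneousSubmodule _ _).mpr (isHomogeneous_monomial _ hdeg)⟩
  change pairing (monomial u (1 : k)) (g : MvPolynomial σ k) = 0 at this
  rw [pairing_monomial, one_mul] at this
  exact hu this

theorem finrank_perp_add_finrank [Finite σ] {e : ℕ} {V : Submodule k (MvPolynomial σ k)}
    (hV : V ≤ homogeneousSubmodule σ k e) :
    finrank k (perp e V) + finrank k V = finrank k (homogeneousSubmodule σ k e) := by
  have hperp : perp e V = ((pairing.restrict (homogeneousSubmodule σ k e)).orthogonal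
      (V.comap (homogeneousSubmodule σ k e).subtype)).map (homogeneousSubmodule σ k e).subtype := by
    ext g
    constructor
    · rintro ⟨hg, hgV⟩
      exact ⟨⟨g, hg⟩, fun f hf => hgV f hf, rfl⟩
    · rintro ⟨g, hgV, rfl⟩
      exact ⟨g.2, fun f hf => hgV ⟨f, hV hf⟩ hf⟩
  rw [hperp, Submodule.finrank_map_subtype_eq,
    LinearMap.BilinForm.finrank_orthogonal (pairing_restrict_nondegenerate e),
    ← (Submodule.comapSubtypeEquivOfLe hV).finrank_eq]
  exact Nat.sub_add_cancel (Submodule.finrank_le _)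

theorem firstContractions_perp_le {J : Finset σ} {e : ℕ} {V W : Submodule k (MvPolynomial σ k)}
    (hmul : ∀ i, ∀ f ∈ V, X i * f ∈ W) : firstContractions J (perp (e + 1) W) ≤ perp e V :=
  Finset.sup_le fun i _ => by
    rintro _ ⟨g, ⟨hg, hgW⟩, rfl⟩
    refine ⟨by simpa using contract_mem_homogeneousSubmodule (u := Finsupp.single i 1) hg,
      fun f hf => ?_⟩
    change pairing f _ = 0
    rw [← pairing_X_mul]
    exact hgW _ (hmul i f hf)

end Duality

/-- Macaulay's bound in codimension `≤ d`. Dually, `perp (d + 1) W` contracts into `perp d V`, of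
dimension `≤ μ ≤ d`, and `min_finrank_le_finrank_firstContractions` then forces
`dim perp (d + 1) W ≤ μ`. -/
theorem finrank_homogeneousSubmodule_succ_le {k σ : Type*} [Field k] [Fintype σ] {d μ : ℕ}
    (hμd : μ ≤ d) {V W : Submodule k (MvPolynomial σ k)} (hV : V ≤ homogeneousSubmodule σ k d)
    (hW : W ≤ homogeneousSubmodule σ k (d + 1))
    (hcodim : finrank k (homogeneousSubmodule σ k d) ≤ finrank k V + μ)
    (hmul : ∀ i, ∀ f ∈ V, X i * f ∈ W) :
    finrank k (homogeneousSubmodule σ k (d + 1)) ≤ finrank k W + μ := by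
  have : FiniteDimensional k (perp (d + 1) W) :=
    Submodule.finiteDimensional_of_le (perp_le_homogeneousSubmodule _ _)
  have : FiniteDimensional k (perp d V) :=
    Submodule.finiteDimensional_of_le (perp_le_homogeneousSubmodule _ _)
  have hW' := finrank_perp_add_finrank hW
  have hV' := finrank_perp_add_finrank hV
  have hL := min_finrank_le_finrank_firstContractions Finset.univ
    (perp_le_homogeneousSubmodule (d + 1) W) (by simp)
  have hC := Submodule.finrank_mono (firstContractions_perp_le (J := Finset.univ) (e := d) hmul)
  omega

section ChangeOfCoefficients

variable {R S σ : Type*} [CommSemiring R] [CommSemiring S]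

def mapₛₗ (f : R →+* S) : MvPolynomial σ R →ₛₗ[f] MvPolynomial σ S where
  toFun := map f
  map_add' := map_add (map f)
  map_smul' a p := by simp [smul_eq_C_mul]

@[simp]
theorem mapₛₗ_apply (f : R →+* S) (p : MvPolynomial σ R) : mapₛₗ f p = map f p :=
  rfl

theorem map_le_homogeneousSubmodule (f : R →+* S) [RingHomSurjective f] {e : ℕ}
    {N : Submodule R (MvPolynomial σ R)} (hN : N ≤ homogeneousSubmodule σ R e) :
    N.map (mapₛₗ f) ≤ homogeneousSubmodule σ S e := by
  rintro _ ⟨p, hp, rfl⟩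
  exact (hN hp).map f

theorem map_homogeneousSubmodule (f : R →+* S) [RingHomSurjective f] (e : ℕ) :
    (homogeneousSubmodule σ R e).map (mapₛₗ f) = homogeneousSubmodule σ S e := by
  refine le_antisymm (map_le_homogeneousSubmodule f le_rfl) fun s hs => ?_
  obtain ⟨p, rfl⟩ := map_surjective f f.surjective s
  refine ⟨homogeneousComponent e p, homogeneousComponent_mem e p, ?_⟩
  ext m
  simp only [mapₛₗ_apply, coeff_map, coeff_homogeneousComponent]
  split_ifs with hm
  · rfl
  · rw [map_zero, ← coeff_map, hs.coeff_eq_zero hm]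

theorem mem_smul_homogeneousSubmodule {I : Ideal R} {e : ℕ} {p : MvPolynomial σ R}
    (hp : p ∈ homogeneousSubmodule σ R e) (hI : ∀ m, coeff m p ∈ I) :
    p ∈ I • homogeneousSubmodule σ R e := by
  rw [p.as_sum]
  refine Submodule.sum_mem _ fun m hm => ?_
  rw [← mul_one (coeff m p), ← smul_eq_mul, ← smul_monomial]
  exact Submodule.smul_mem_smul (hI m) (isHomogeneous_monomial _
    (mem_homogeneousSubmodule_iff_degree_eq.mp hp m (mem_support_iff.mp hm)))

end ChangeOfCoefficients

section LocalRing

variable {A σ : Type*} [CommRing A] [IsLocalRing A] [Finite σ] {e : ℕ}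
  {N : Submodule A (MvPolynomial σ A)}

local notation "𝕜" => IsLocalRing.ResidueField A

theorem homogeneousSubmodule_le_of_le_map (hN : N ≤ homogeneousSubmodule σ A e)
    (h : homogeneousSubmodule σ 𝕜 e ≤ N.map (mapₛₗ (IsLocalRing.residue A))) :
    homogeneousSubmodule σ A e ≤ N := by
  refine le_of_le_smul_of_le_jacobson_bot (homogeneousSubmodule_fg σ A e)
    (IsLocalRing.maximalIdeal_le_jacobson ⊥) fun x hx => ?_
  obtain ⟨y, hy, hyx⟩ :=
    h ((map_homogeneousSubmodule (IsLocalRing.residue A) e).le (mem_map_of_mem hx))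
  rw [← add_sub_cancel y x]
  refine add_mem_sup hy (mem_smul_homogeneousSubmodule (sub_mem hx (hN hy)) fun m => ?_)
  rw [← IsLocalRing.residue_eq_zero_iff, coeff_sub, map_sub, ← coeff_map, ← coeff_map]
  exact sub_eq_zero.mpr (congrArg (coeff m) hyx).symm

theorem finrank_residue_le_of_le_sup_span {ι : Type*} [Fintype ι]
    (hN : N ≤ homogeneousSubmodule σ A e) (r : ι → MvPolynomial σ A)
    (hr : homogeneousSubmodule σ A e ≤ N ⊔ span A (range r)) :
    finrank 𝕜 (homogeneousSubmodule σ 𝕜 e) ≤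
      finrank 𝕜 (N.map (mapₛₗ (IsLocalRing.residue A))) + Fintype.card ι := by
  have : FiniteDimensional 𝕜 (N.map (mapₛₗ (IsLocalRing.residue A))) :=
    Submodule.finiteDimensional_of_le (map_le_homogeneousSubmodule _ hN)
  refine finrank_le_finrank_add_card (mapₛₗ (IsLocalRing.residue A) ∘ r) ?_
  rw [← map_homogeneousSubmodule (IsLocalRing.residue A), range_comp, ← map_span,
    ← Submodule.map_sup]
  exact map_mono hr

theorem exists_le_sup_span_of_finrank_residue_le {μ : ℕ} (hN : N ≤ homogeneousSubmodule σ A e)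
    (h : finrank 𝕜 (homogeneousSubmodule σ 𝕜 e) ≤
      finrank 𝕜 (N.map (mapₛₗ (IsLocalRing.residue A))) + μ) :
    ∃ g : Fin μ → MvPolynomial σ A, (∀ j, g j ∈ homogeneousSubmodule σ A e) ∧
      homogeneousSubmodule σ A e ≤ N ⊔ span A (range g) := by
  obtain ⟨gbar, hgbar, hspan⟩ :=
    Submodule.exists_le_sup_span_of_finrank_le (map_le_homogeneousSubmodule _ hN) h
  choose g hg hgbar using fun j =>
    (map_homogeneousSubmodule (IsLocalRing.residue A) e).ge (hgbar j)
  refine ⟨g, hg, homogeneousSubmodule_le_of_le_map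
    (sup_le hN (span_le.mpr (range_subset_iff.mpr hg))) ?_⟩
  rwa [Submodule.map_sup, map_span, ← range_comp,
    show mapₛₗ (IsLocalRing.residue A) ∘ g = gbar from _root_.funext hgbar]

end LocalRing

end MvPolynomial

theorem mulT1_le_homogComp {n d : ℕ} {A : Type*} [CommRing A]
    {N : Submodule A (MvPolynomial (Fin (n + 1)) A)} (hN : N ≤ homogComp n A d) :
    mulT1 N ≤ homogComp n A (d + 1) :=
  span_le.mpr fun _ ⟨_, hℓ, _, hf, hp⟩ => hp ▸ add_comm 1 d ▸ IsHomogeneous.mul hℓ (hN hf)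

theorem X_mul_mem_mulT1 {n : ℕ} {A : Type*} [CommRing A]
    {N : Submodule A (MvPolynomial (Fin (n + 1)) A)} (i : Fin (n + 1)) {f : MvPolynomial _ A}
    (hf : f ∈ N) : X i * f ∈ mulT1 N :=
  subset_span ⟨X i, isHomogeneous_X A i, f, hf, rfl⟩

theorem mulT1_eq_of_free_general
    {A : Type*} [CommRing A] [IsLocalRing A]
    {n μ d : ℕ} (hμd : μ ≤ d)
    (Id : Submodule A (MvPolynomial (Fin (n + 1)) A))
    (Id1 : Submodule A (MvPolynomial (Fin (n + 1)) A))
    (hId : Id ≤ homogComp n A d) (hId1 : Id1 ≤ homogComp n A (d + 1))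
    (hmul : mulT1 Id ≤ Id1)
    (hfree : Nonempty (Module.Basis (Fin μ) A (quotComp Id d)))
    (hfree1 : Nonempty (Module.Basis (Fin μ) A (quotComp Id1 (d + 1)))) :
    mulT1 Id = Id1 := by
  obtain ⟨b⟩ := hfree
  obtain ⟨b1⟩ := hfree1
  have hT1 := mulT1_le_homogComp hId
  obtain ⟨r, -, hr⟩ := Submodule.exists_le_sup_span_of_basis b
  have hcodim := finrank_residue_le_of_le_sup_span hId r hr
  rw [Fintype.card_fin] at hcodim
  have hgrowth := finrank_homogeneousSubmodule_succ_le hμd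
    (map_le_homogeneousSubmodule (IsLocalRing.residue A) hId)
    (map_le_homogeneousSubmodule (IsLocalRing.residue A) hT1) hcodim fun i _ ⟨p, hp, hpf⟩ =>
      ⟨X i * p, X_mul_mem_mulT1 i hp, by simp [← hpf]⟩
  obtain ⟨g, hgT, hg⟩ := exists_le_sup_span_of_finrank_residue_le hT1 hgrowth
  exact Submodule.eq_of_le_sup_span_of_basis hmul hId1 b1 g hgT hg

/-- Proposition `prop:2.5`.
Let `A` be a noetherian local `K`-algebra (`K` algebraically closed of characteristic 0),
`T = A[x_0, …, x_n]`, and `μ ≤ d` positive integers.  Let `I_d ⊆ T_d` and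
`I_{d+1} ⊆ T_{d+1}` be `A`-submodules with `T_1 · I_d ⊆ I_{d+1}`, such that `T_d/I_d` and
`T_{d+1}/I_{d+1}` are free `A`-modules of rank `μ`.  Then `T_1 · I_d = I_{d+1}`. -/
theorem mulT1_eq_of_free {K : Type*} [Field K] [IsAlgClosed K] [CharZero K]
    {A : Type*} [CommRing A] [Algebra K A] [IsNoetherianRing A] [IsLocalRing A]
    {n μ d : ℕ} (hμ : 0 < μ) (hμd : μ ≤ d)
    (Id : Submodule A (MvPolynomial (Fin (n + 1)) A))
    (Id1 : Submodule A (MvPolynomial (Fin (n + 1)) A))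
    (hId : Id ≤ homogComp n A d) (hId1 : Id1 ≤ homogComp n A (d + 1))
    (hmul : mulT1 Id ≤ Id1)
    (hfree : Nonempty (Module.Basis (Fin μ) A (quotComp Id d)))
    (hfree1 : Nonempty (Module.Basis (Fin μ) A (quotComp Id1 (d + 1)))) :
    mulT1 Id = Id1 :=
  mulT1_eq_of_free_general hμd Id Id1 hId hId1 hmul hfree hfree1

end
end

section
/- Let A be a noetherian local K-algebra, T = A[x_0,...,x_n], and μ ≤ d integers. Let I_d ⊆ T_d and I_{d+1} ⊆ T_{d+1} be A-submodules such that Δ := T_d/I_d and Δ' := T_{d+1}/I_{d+1} are free A-modules of rank μ. Then T_1·I_d ⊆ I_{d+1} if and only if for every μ-tuple B of monomials of degree d, every (μ−1)-tuple B' of monomials of degree d+1, every monomial a of degree d, and every k ∈ {0,...,n}: Δ_B · Δ'_{(B',x_k·a)} − Σ_{b∈B} Δ_{B^{[b|a]}} · Δ'_{(B',x_k·b)} = 0, where Δ'_{(B',p)} is the Plücker coordinate in Δ' of the μ-tuple (b'_1,...,b'_{μ−1},p). -/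
/-! By Cramer's rule, for a `μ`-tuple `B` of monomials of degree `d` and a monomial `a`, the
polynomial `g = Δ_B · a - Σ_{b ∈ B} Δ_{B^{[b|a]}} · b` has zero class in `Δ`, so lies in `I_d`;
the displayed expression is `Δ'_{(B', x_k g)}`, which is linear in the last slot. Hence
`T_1 · I_d ⊆ I_{d+1}` gives the relations. Conversely, over the local ring `A` the monomials
contain `μ`-tuples with unit Plücker coordinates in `Δ` and in `Δ'`. In `Δ'` this makes the
vanishing of `Δ'_{(B', z)}` for all `B'` force `z = 0` (Cramer again), so the relations say
`x_k g ∈ I_{d+1}`; in `Δ` it gives, for `f = Σ f_a a ∈ I_d`, the identity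
`Δ_B · f = Σ_a f_a g_a`, whence `x_k f ∈ I_{d+1}`. -/

open MvPolynomial

noncomputable section

/-- The class in `T_d / (N ∩ T_d)` of (the degree-`d` homogeneous component of) a
polynomial `p`; for `p` homogeneous of degree `d` this is the class of `p`. -/
def cls {n : ℕ} {A : Type*} [CommRing A]
    (N : Submodule A (MvPolynomial (Fin (n + 1)) A)) (d : ℕ)
    (p : MvPolynomial (Fin (n + 1)) A) : quotComp N d :=
  Submodule.Quotient.mk
    ⟨homogeneousComponent d p,
      (mem_homogeneousSubmodule _ _).2 (homogeneousComponent_isHomogeneous d p)⟩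

/-- The Plücker coordinate `Δ_F = det (δ_i (p_j))` of a `μ`-tuple `F` of elements of a
free module `Δ` of rank `μ`, with respect to the dual basis `(δ_i)` of a basis `e`. -/
def plk {A : Type*} [CommRing A] {M : Type*} [AddCommGroup M] [Module A M] {μ : ℕ}
    (e : Module.Basis (Fin μ) A M) (F : Fin μ → M) : A :=
  (Matrix.of fun i j => e.coord i (F j)).det

/-- The `μ`-tuple `(b'_1, …, b'_{μ−1}, p)` obtained by appending `p` to a
`(μ−1)`-tuple `B'`. -/
def snocTuple {μ : ℕ} {M : Type*} (B' : Fin (μ - 1) → M) (p : M) : Fin μ → M :=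
  fun j => if h : (j : ℕ) < μ - 1 then B' ⟨j, h⟩ else p

open Module

section Plucker

variable {A M : Type*} [CommRing A] [AddCommGroup M] [Module A M] {μ : ℕ}

theorem plk_eq_det (e : Basis (Fin μ) A M) (F : Fin μ → M) : plk e F = e.det F := rfl

theorem plk_smul_eq_sum_plk_update_smul (e : Basis (Fin μ) A M) (F : Fin μ → M) (x : M) :
    plk e F • x = ∑ j, plk e (Function.update F j x) • F j := by
  classical
  refine e.ext_elem fun i => ?_
  have cramer := congrFun (Matrix.mulVec_cramer (e.toMatrix F) (e.repr x)) i
  simp only [Matrix.mulVec, dotProduct, Pi.smul_apply, smul_eq_mul, Matrix.cramer_apply,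
    ← Basis.toMatrix_update] at cramer
  simp only [map_smul, map_sum, Finsupp.smul_apply, Finsupp.coe_finsetSum, Finset.sum_apply,
    smul_eq_mul, plk_eq_det, Basis.det_apply, ← cramer, Basis.toMatrix_apply, mul_comm]

theorem eq_zero_of_plk_update_eq_zero (e : Basis (Fin μ) A M) {F : Fin μ → M}
    (hF : IsUnit (plk e F)) {x : M} (hx : ∀ j, plk e (Function.update F j x) = 0) : x = 0 := by
  have h := plk_smul_eq_sum_plk_update_smul e F x
  simp only [hx, zero_smul, Finset.sum_const_zero] at h
  exact hF.smul_eq_zero.1 h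

theorem exists_isUnit_plk [IsLocalRing A] (e : Basis (Fin μ) A M) {ι : Type*} (v : ι → M)
    {S : Set ι} (hS : Submodule.span A (v '' S) = ⊤) :
    ∃ B : Fin μ → ι, (∀ t, B t ∈ S) ∧ IsUnit (plk e (v ∘ B)) := by
  have := Free.of_basis e
  have := Module.Finite.of_basis e
  have := finitePresentation_of_projective A M
  obtain ⟨κ, a, b, hb⟩ := exists_basis_of_span_of_flat (v ∘ Subtype.val : S → M)
    (by rwa [Set.range_comp, Subtype.range_coe])
  let σ : Fin μ ≃ κ := e.indexEquiv b
  refine ⟨fun t => a (σ t), fun t => (a (σ t)).2, ?_⟩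
  have hB : v ∘ (fun t => (a (σ t) : ι)) = b.reindex σ.symm := by
    ext t
    simp [hb]
  rw [hB, plk_eq_det]
  exact e.isUnit_det _

end Plucker

section SnocTuple

variable {M : Type*} {μ : ℕ}

theorem snocTuple_eq_update (hμ : 0 < μ) (v : Fin (μ - 1) → M) (z w : M) :
    snocTuple v z = Function.update (snocTuple v w) ⟨μ - 1, by omega⟩ z := by
  funext j
  by_cases hj : (j : ℕ) < μ - 1
  · have hne : j ≠ ⟨μ - 1, by omega⟩ := Fin.ne_of_val_ne (by simp; omega)
    simp only [snocTuple, Function.update_of_ne hne, dif_pos hj]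
  · have hjl : j = ⟨μ - 1, by omega⟩ := Fin.ext (by have := j.2; simp; omega)
    simp only [snocTuple, dif_neg hj]
    rw [hjl, Function.update_self]

theorem snocTuple_castLE (hμ : 0 < μ) (G : Fin μ → M) :
    snocTuple (fun t => G (Fin.castLE (Nat.sub_le μ 1) t)) (G ⟨μ - 1, by omega⟩) = G := by
  funext j
  by_cases hj : (j : ℕ) < μ - 1
  · simp only [snocTuple, dif_pos hj]
    rfl
  · have hjl : j = ⟨μ - 1, by omega⟩ := Fin.ext (by have := j.2; simp; omega)
    simp only [snocTuple, dif_neg hj]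
    rw [hjl]

end SnocTuple

section PlkSnocTuple

variable {A M : Type*} [CommRing A] [AddCommGroup M] [Module A M] {μ : ℕ}

def plkSnocLinearMap (hμ : 0 < μ) (e : Basis (Fin μ) A M) (v : Fin (μ - 1) → M) :
    M →ₗ[A] A :=
  e.det.toMultilinearMap.toLinearMap (snocTuple v 0) ⟨μ - 1, by omega⟩

theorem plkSnocLinearMap_apply (hμ : 0 < μ) (e : Basis (Fin μ) A M) (v : Fin (μ - 1) → M)
    (z : M) : plkSnocLinearMap hμ e v z = plk e (snocTuple v z) := by
  rw [snocTuple_eq_update hμ v z 0]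
  rfl

theorem eq_zero_of_forall_plk_snocTuple_eq_zero [IsLocalRing A] (hμ : 0 < μ)
    (e : Basis (Fin μ) A M) {ι : Type*} (v : ι → M) {S : Set ι}
    (hS : Submodule.span A (v '' S) = ⊤) {z : M}
    (hz : ∀ B' : Fin (μ - 1) → ι, (∀ t, B' t ∈ S) → plk e (snocTuple (v ∘ B') z) = 0) :
    z = 0 := by
  obtain ⟨B, hBS, hB⟩ := exists_isUnit_plk e v hS
  refine eq_zero_of_plk_update_eq_zero e hB fun i => ?_
  -- Swapping slot `i` with the last one turns `(v ∘ B)^{[i|z]}` into a `snocTuple` with last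
  -- entry `z`, at the cost of a sign.
  let l : Fin μ := ⟨μ - 1, by omega⟩
  let σ := Equiv.swap i l
  let G := Function.update (v ∘ B) i z ∘ σ
  have hGl : G l = z := by simp [G, σ]
  have hG : ∀ t : Fin (μ - 1),
      G (Fin.castLE (Nat.sub_le μ 1) t) = v (B (σ (Fin.castLE (Nat.sub_le μ 1) t))) := by
    intro t
    have hne : σ (Fin.castLE (Nat.sub_le μ 1) t) ≠ i := by
      rw [Ne, Equiv.swap_apply_eq_iff, Equiv.swap_apply_left]
      exact Fin.ne_of_val_ne (by simp [l]; omega)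
    simp [G, Function.update_of_ne hne]
  have hG0 : plk e G = 0 := by
    rw [← snocTuple_castLE hμ G, hGl, show _ = v ∘ _ from funext hG]
    exact hz _ fun t => hBS _
  rwa [plk_eq_det, e.det.map_perm, smul_eq_zero_iff_eq, ← plk_eq_det] at hG0

end PlkSnocTuple

section CramerMap

variable {A P M N : Type*} [CommRing A] [AddCommGroup P] [Module A P] [AddCommGroup M]
  [Module A M] [AddCommGroup N] [Module A N] {μ : ℕ}

def cramerMap (e : Basis (Fin μ) A M) (π : P →ₗ[A] M) (B : Fin μ → P) : P →ₗ[A] P :=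
  plk e (π ∘ B) • LinearMap.id -
    ∑ t, (e.det.toMultilinearMap.toLinearMap (π ∘ B) t ∘ₗ π).smulRight (B t)

theorem cramerMap_apply (e : Basis (Fin μ) A M) (π : P →ₗ[A] M) (B : Fin μ → P) (a : P) :
    cramerMap e π B a =
      plk e (π ∘ B) • a - ∑ t, plk e (Function.update (π ∘ B) t (π a)) • B t := by
  simp only [cramerMap, LinearMap.sub_apply, LinearMap.smul_apply, LinearMap.id_apply,
    LinearMap.coe_sum, Finset.sum_apply, LinearMap.smulRight_apply, LinearMap.comp_apply]
  rfl

theorem map_cramerMap_apply (e : Basis (Fin μ) A M) (π : P →ₗ[A] M) (B : Fin μ → P) (a : P) :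
    π (cramerMap e π B a) = 0 := by
  rw [cramerMap_apply, map_sub, map_smul, map_sum, plk_smul_eq_sum_plk_update_smul e (π ∘ B),
    sub_eq_zero]
  simp only [map_smul, Function.comp_apply]

theorem cramerMap_apply_of_map_eq_zero (e : Basis (Fin μ) A M) (π : P →ₗ[A] M)
    (B : Fin μ → P) {a : P} (ha : π a = 0) : cramerMap e π B a = plk e (π ∘ B) • a := by
  simp [cramerMap_apply, ha, plk_eq_det]

theorem cramerMap_mem_span (e : Basis (Fin μ) A M) (π : P →ₗ[A] M) {ι : Type*} (s : ι → P)
    {S : Set ι} {B : Fin μ → ι} (hB : ∀ t, B t ∈ S) {a : ι} (ha : a ∈ S) :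
    cramerMap e π (s ∘ B) (s a) ∈ Submodule.span A (s '' S) := by
  rw [cramerMap_apply]
  exact Submodule.sub_mem _ (Submodule.smul_mem _ _ (Submodule.subset_span ⟨a, ha, rfl⟩))
    (Submodule.sum_mem _ fun t _ =>
      Submodule.smul_mem _ _ (Submodule.subset_span ⟨B t, hB t, rfl⟩))

theorem inf_ker_le_ker_iff_cramerMap [IsLocalRing A] (e : Basis (Fin μ) A M) (π : P →ₗ[A] M)
    (φ : P →ₗ[A] N) {ι : Type*} (s : ι → P) {S : Set ι}
    (hπ : Submodule.span A ((π ∘ s) '' S) = ⊤) :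
    Submodule.span A (s '' S) ⊓ LinearMap.ker π ≤ LinearMap.ker φ ↔
      ∀ B : Fin μ → ι, (∀ t, B t ∈ S) → ∀ a ∈ S, φ (cramerMap e π (s ∘ B) (s a)) = 0 := by
  constructor
  · intro h B hB a ha
    exact h ⟨cramerMap_mem_span e π s hB ha, map_cramerMap_apply e π _ _⟩
  · intro h f ⟨hfS, hfπ⟩
    obtain ⟨B, hB, hunit⟩ := exists_isUnit_plk e (π ∘ s) hπ
    have hvanish : Submodule.span A (s '' S) ≤ LinearMap.ker (φ ∘ₗ cramerMap e π (s ∘ B)) :=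
      Submodule.span_le.2 fun _ ⟨a, ha, hfa⟩ => hfa ▸ h B hB a ha
    have hf := hvanish hfS
    rw [LinearMap.mem_ker, LinearMap.comp_apply, cramerMap_apply_of_map_eq_zero e π _ hfπ,
      map_smul] at hf
    exact hunit.smul_eq_zero.1 hf

theorem plk_snocTuple_map_cramerMap (hμ : 0 < μ) (e : Basis (Fin μ) A M)
    (e' : Basis (Fin μ) A N) (π : P →ₗ[A] M) (φ : P →ₗ[A] N) (B : Fin μ → P)
    (v : Fin (μ - 1) → N) (a : P) :
    plk e' (snocTuple v (φ (cramerMap e π B a))) =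
      plk e (π ∘ B) * plk e' (snocTuple v (φ a)) -
        ∑ t, plk e (Function.update (π ∘ B) t (π a)) * plk e' (snocTuple v (φ (B t))) := by
  simp only [← plkSnocLinearMap_apply hμ, cramerMap_apply, map_sub, map_smul, map_sum,
    smul_eq_mul]

theorem inf_ker_le_ker_iff_plucker [IsLocalRing A] (hμ : 0 < μ) (e : Basis (Fin μ) A M)
    (e' : Basis (Fin μ) A N) (π : P →ₗ[A] M) (φ : P →ₗ[A] N) {ι : Type*} (s : ι → P)
    {S : Set ι} (hπ : Submodule.span A ((π ∘ s) '' S) = ⊤) {ι' : Type*} (v : ι' → N)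
    {S' : Set ι'} (hv : Submodule.span A (v '' S') = ⊤) :
    Submodule.span A (s '' S) ⊓ LinearMap.ker π ≤ LinearMap.ker φ ↔
      ∀ B : Fin μ → ι, (∀ t, B t ∈ S) → ∀ B' : Fin (μ - 1) → ι', (∀ t, B' t ∈ S') →
        ∀ a ∈ S,
          plk e (π ∘ s ∘ B) * plk e' (snocTuple (v ∘ B') (φ (s a))) -
            ∑ t, plk e (Function.update (π ∘ s ∘ B) t (π (s a))) *
              plk e' (snocTuple (v ∘ B') (φ (s (B t)))) = 0 := by
  rw [inf_ker_le_ker_iff_cramerMap e π φ s hπ]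
  constructor
  · intro h B hB B' _ a ha
    have expand := plk_snocTuple_map_cramerMap hμ e e' π φ (s ∘ B) (v ∘ B') (s a)
    rw [h B hB a ha, ← plkSnocLinearMap_apply hμ, map_zero] at expand
    exact expand.symm
  · intro h B hB a ha
    refine eq_zero_of_forall_plk_snocTuple_eq_zero hμ e' v hv fun B' hB' => ?_
    rw [plk_snocTuple_map_cramerMap hμ]
    exact h B hB B' hB' a ha

end CramerMap

section Polynomial

variable {n : ℕ} {A : Type*} [CommRing A]

def clsLinearMap (N : Submodule A (MvPolynomial (Fin (n + 1)) A)) (d : ℕ) :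
    MvPolynomial (Fin (n + 1)) A →ₗ[A] quotComp N d :=
  (N.comap (homogComp n A d).subtype).mkQ ∘ₗ
    LinearMap.codRestrict (homogComp n A d) (homogeneousComponent d)
      fun p => (mem_homogeneousSubmodule _ _).2 (homogeneousComponent_isHomogeneous d p)

variable {N : Submodule A (MvPolynomial (Fin (n + 1)) A)} {d : ℕ}

theorem cls_of_mem {p : MvPolynomial (Fin (n + 1)) A} (hp : p ∈ homogComp n A d) :
    cls N d p = Submodule.Quotient.mk ⟨p, hp⟩ := by
  unfold cls
  congr 1
  exact Subtype.ext ((homogeneousComponent_of_mem hp).trans (if_pos rfl))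

theorem cls_eq_zero_iff {p : MvPolynomial (Fin (n + 1)) A} (hp : p ∈ homogComp n A d) :
    cls N d p = 0 ↔ p ∈ N := by
  rw [cls_of_mem hp]
  exact (Submodule.Quotient.mk_eq_zero _).trans Submodule.mem_comap

theorem homogComp_eq_span_monomial :
    homogComp n A d = Submodule.span A ((fun a => monomial a 1) '' {a | a.degree = d}) := by
  rw [homogComp, homogeneousSubmodule_eq_finsupp_supported,
    AddMonoidAlgebra.supported_eq_span_single]
  rfl

theorem span_cls_monomial_eq_top :
    Submodule.span A ((fun a => cls N d (monomial a 1)) '' {a | a.degree = d}) = ⊤ := by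
  have himage : (fun a => cls N d (monomial a (1 : A))) '' {a | a.degree = d} =
      clsLinearMap N d '' ((fun a => monomial a 1) '' {a | a.degree = d}) := by
    rw [Set.image_image]
    rfl
  rw [himage, ← Submodule.map_span, ← homogComp_eq_span_monomial, eq_top_iff]
  rintro z -
  obtain ⟨⟨p, hp⟩, rfl⟩ := Submodule.Quotient.mk_surjective _ z
  exact ⟨p, hp, cls_of_mem hp⟩

theorem X_mul_mem_homogComp (k : Fin (n + 1)) {f : MvPolynomial (Fin (n + 1)) A}
    (hf : f ∈ homogComp n A d) : X k * f ∈ homogComp n A (d + 1) := by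
  rw [add_comm d 1]
  exact (isHomogeneous_X A k).mul hf

theorem forall_homogComp_one_mul_mem_iff {Id Id1 : Submodule A (MvPolynomial (Fin (n + 1)) A)}
    (hId : Id ≤ homogComp n A d) :
    (∀ ℓ ∈ homogComp n A 1, ∀ f ∈ Id, ℓ * f ∈ Id1) ↔
      ∀ k, homogComp n A d ⊓ LinearMap.ker (clsLinearMap Id d) ≤
        LinearMap.ker (clsLinearMap Id1 (d + 1) ∘ₗ LinearMap.mulLeft A (X k)) := by
  constructor
  · rintro h k f ⟨hf, hf0⟩
    have hfId : f ∈ Id := (cls_eq_zero_iff hf).1 hf0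
    exact (cls_eq_zero_iff (X_mul_mem_homogComp k hf)).2
      (h _ ((mem_homogeneousSubmodule _ _).2 (isHomogeneous_X A k)) f hfId)
  · intro h ℓ hℓ f hf
    have hfd := hId hf
    have hXf : ∀ k, X k * f ∈ Id1 := fun k =>
      (cls_eq_zero_iff (X_mul_mem_homogComp k hfd)).1 (h k ⟨hfd, (cls_eq_zero_iff hfd).2 hf⟩)
    rw [homogComp, homogeneousSubmodule_one_eq_span_X] at hℓ
    induction hℓ using Submodule.span_induction with
    | mem _ hX => obtain ⟨k, rfl⟩ := hX; exact hXf k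
    | zero => rw [zero_mul]; exact Id1.zero_mem
    | add _ _ _ _ h₁ h₂ => rw [add_mul]; exact Id1.add_mem h₁ h₂
    | smul c _ _ h₁ => rw [smul_mul_assoc]; exact Id1.smul_mem c h₁

end Polynomial

theorem mulT1_le_iff_plucker_general
    {A : Type*} [CommRing A] [IsLocalRing A]
    {n μ d : ℕ} (hμ : 0 < μ)
    (Id Id1 : Submodule A (MvPolynomial (Fin (n + 1)) A))
    (hId : Id ≤ homogComp n A d)
    (e : Module.Basis (Fin μ) A (quotComp Id d))
    (e' : Module.Basis (Fin μ) A (quotComp Id1 (d + 1))) :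
    (∀ ℓ ∈ homogComp n A 1, ∀ f ∈ Id, ℓ * f ∈ Id1) ↔
      ∀ (B : Fin μ → (Fin (n + 1) →₀ ℕ)), (∀ t, (B t).degree = d) →
      ∀ (B' : Fin (μ - 1) → (Fin (n + 1) →₀ ℕ)), (∀ t, (B' t).degree = d + 1) →
      ∀ (a : Fin (n + 1) →₀ ℕ), a.degree = d →
      ∀ k : Fin (n + 1),
        plk e (fun t => cls Id d (monomial (B t) (1 : A))) *
            plk e' (snocTuple (fun t => cls Id1 (d + 1) (monomial (B' t) (1 : A)))
              (cls Id1 (d + 1) (X k * monomial a (1 : A)))) -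
          ∑ t : Fin μ,
            plk e (Function.update (fun s => cls Id d (monomial (B s) (1 : A))) t
                (cls Id d (monomial a (1 : A)))) *
              plk e' (snocTuple (fun s => cls Id1 (d + 1) (monomial (B' s) (1 : A)))
                (cls Id1 (d + 1) (X k * monomial (B t) (1 : A)))) = 0 := by
  rw [forall_homogComp_one_mul_mem_iff hId, homogComp_eq_span_monomial]
  have plucker := fun k : Fin (n + 1) => inf_ker_le_ker_iff_plucker hμ e e' (clsLinearMap Id d)
    (clsLinearMap Id1 (d + 1) ∘ₗ LinearMap.mulLeft A (X k)) (fun a => monomial a 1)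
    span_cls_monomial_eq_top _ span_cls_monomial_eq_top
  simp only [plucker]
  exact ⟨fun h B hB B' hB' a ha k => h k B hB B' hB' a ha,
    fun h k B hB B' hB' a ha => h B hB B' hB' a ha k⟩

/-- equations `(3.1)` cutting out `W`, from Theorem after
Lemma `lemma:plucker:coord`.
Let `A` be a noetherian local `K`-algebra, `T = A[x_0, …, x_n]`, `μ ≤ d` positive
integers, and `I_d ⊆ T_d`, `I_{d+1} ⊆ T_{d+1}` `A`-submodules with `Δ = T_d/I_d` and
`Δ' = T_{d+1}/I_{d+1}` free of rank `μ`.  Then `T_1 · I_d ⊆ I_{d+1}` iff for all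
`μ`-tuples `B` of monomials of degree `d`, all `(μ−1)`-tuples `B'` of monomials of
degree `d+1`, every monomial `a` of degree `d` and every `k ∈ {0, …, n}`:
`Δ_B · Δ'_{(B', x_k a)} − Σ_{b ∈ B} Δ_{B^{[b|a]}} · Δ'_{(B', x_k b)} = 0`. -/
theorem mulT1_le_iff_plucker {K : Type*} [Field K] [IsAlgClosed K] [CharZero K]
    {A : Type*} [CommRing A] [Algebra K A] [IsNoetherianRing A] [IsLocalRing A]
    {n μ d : ℕ} (hμ : 0 < μ) (hμd : μ ≤ d)
    (Id Id1 : Submodule A (MvPolynomial (Fin (n + 1)) A))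
    (hId : Id ≤ homogComp n A d) (hId1 : Id1 ≤ homogComp n A (d + 1))
    (e : Module.Basis (Fin μ) A (quotComp Id d))
    (e' : Module.Basis (Fin μ) A (quotComp Id1 (d + 1))) :
    (∀ ℓ ∈ homogComp n A 1, ∀ f ∈ Id, ℓ * f ∈ Id1) ↔
      ∀ (B : Fin μ → (Fin (n + 1) →₀ ℕ)), (∀ t, (B t).degree = d) →
      ∀ (B' : Fin (μ - 1) → (Fin (n + 1) →₀ ℕ)), (∀ t, (B' t).degree = d + 1) →
      ∀ (a : Fin (n + 1) →₀ ℕ), a.degree = d →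
      ∀ k : Fin (n + 1),
        plk e (fun t => cls Id d (monomial (B t) (1 : A))) *
            plk e' (snocTuple (fun t => cls Id1 (d + 1) (monomial (B' t) (1 : A)))
              (cls Id1 (d + 1) (X k * monomial a (1 : A)))) -
          ∑ t : Fin μ,
            plk e (Function.update (fun s => cls Id d (monomial (B s) (1 : A))) t
                (cls Id d (monomial a (1 : A)))) *
              plk e' (snocTuple (fun s => cls Id1 (d + 1) (monomial (B' s) (1 : A)))
                (cls Id1 (d + 1) (X k * monomial (B t) (1 : A)))) = 0 :=
  mulT1_le_iff_plucker_general hμ Id Id1 hId e e'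

end
end
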